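/- Let K ≥ 2 and set γ_k = k·(K−k)/2 for k = 1, …, K−1, with the convention γ₀ = γ_K = 0. Let M be the K×K real matrix with entries M_{k,k} = −(γ_{k−1} + γ_k) for k = 1, …, K, M_{k,k−1} = γ_{k−1} for k = 2, …, K, M_{k,k+1} = γ_k for k = 1, …, K−1, and M_{k,k'} = 0 when |k−k'| ≥ 2. Let e₁ = (1/√K)·(1, 1, …, 1) ∈ ℝ^K. Then M·e₁ = 0, and for every x ∈ ℝ^K with Σ_{k=1}^K x_k = 0, the Euclidean inner product satisfies (M·x, x) ≤ −‖x‖², where ‖·‖ is the Euclidean norm. -/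

import Mathlib

/-- The coefficients `γ_k = k (K - k) / 2`. -/
noncomputable def γcoef (K k : ℕ) : ℝ := (k : ℝ) * ((K : ℝ) - (k : ℝ)) / 2

/-- The Jacobian at the origin of the interaction map `Φ`. -/
noncomputable def Mmat (K : ℕ) : Matrix (Fin K) (Fin K) ℝ :=
  Matrix.of fun i j =>
    if (j : ℕ) = (i : ℕ) then -(γcoef K i + γcoef K (i + 1))
    else if (j : ℕ) + 1 = (i : ℕ) then γcoef K i
    else if (i : ℕ) + 1 = (j : ℕ) then γcoef K (i + 1)
    else 0

open Finset

lemma gamma_zero (K : ℕ) : γcoef K 0 = 0 := by simp [γcoef]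

lemma gamma_K (K : ℕ) : γcoef K K = 0 := by simp [γcoef]

lemma gauss' (n : ℕ) : ∑ l ∈ range n, (l:ℝ) = n * ((n:ℝ) - 1) / 2 := by
  induction n with
  | zero => simp
  | succ n ih => rw [Finset.sum_range_succ, ih]; push_cast; ring

lemma sbp (γ y : ℕ → ℝ) (n : ℕ) :
    ∑ k ∈ range n, ((γ k * y (k-1) - (γ k + γ (k+1)) * y k + γ (k+1) * y (k+1)) * y k
      + γ k * (y k - y (k-1))^2) = γ n * y (n-1) * (y n - y (n-1)) := by
  induction n with
  | zero => show (0:ℝ) = γ 0 * y 0 * (y 0 - y 0); ring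
  | succ n ih =>
      rw [Finset.sum_range_succ, ih]
      simp only [Nat.add_sub_cancel]
      ring

lemma abelsum (u v : ℕ → ℝ) (n : ℕ) :
    ∑ k ∈ range n, (u k * (v (k+1) - v k) + v k * (u k - u (k-1)))
      = v n * u (n-1) - v 0 * u 0 := by
  induction n with
  | zero => show (0:ℝ) = v 0 * u 0 - v 0 * u 0; ring
  | succ n ih =>
      rw [Finset.sum_range_succ, ih]
      simp only [Nat.add_sub_cancel]
      ring

/-- The Green's function of the discrete Dirichlet Laplacian on `{0, …, K}`. -/
noncomputable def gf (K k l : ℕ) : ℝ :=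
  ((min k l : ℕ) : ℝ) * ((K:ℝ) - ((max k l : ℕ) : ℝ)) / K

lemma gf_symm (K k l : ℕ) : gf K k l = gf K l k := by
  simp [gf, min_comm, max_comm]

lemma gf_nonneg {K k l : ℕ} (hk : k < K) (hl : l < K) : 0 ≤ gf K k l := by
  have h2 : (max k l : ℕ) < K := by omega
  have h3 : (0:ℝ) ≤ (K:ℝ) - ((max k l : ℕ) : ℝ) := by
    have := (Nat.cast_lt (α := ℝ)).2 h2
    linarith
  exact div_nonneg (mul_nonneg (Nat.cast_nonneg _) h3) (Nat.cast_nonneg K)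

lemma gf_right0 (K k : ℕ) : gf K k 0 = 0 := by simp [gf]

lemma gf_rightK {K k : ℕ} (hk : k ≤ K) : gf K k K = 0 := by
  simp [gf, Nat.max_eq_right hk]

lemma gf_rowsum {K k : ℕ} (hk : k < K) :
    ∑ l ∈ range K, gf K k l = γcoef K k := by
  have hK0 : (K:ℝ) ≠ 0 := Nat.cast_ne_zero.2 (by omega)
  have hkK : k + 1 ≤ K := hk
  rw [← Finset.sum_range_add_sum_Ico (fun l => gf K k l) hkK]
  have h1 : ∑ l ∈ range (k+1), gf K k l = ((k:ℝ) * ((k:ℝ)+1)/2) * (((K:ℝ) - k)/K) := by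
    have hc : ∀ l ∈ range (k+1), gf K k l = (l:ℝ) * (((K:ℝ) - k)/K) := by
      intro l hl
      have hl' : l ≤ k := by simpa [Nat.lt_succ_iff] using hl
      rw [gf, min_eq_right hl', max_eq_left hl']
      ring
    rw [Finset.sum_congr rfl hc, ← Finset.sum_mul, gauss']
    push_cast; ring
  have h2 : ∑ l ∈ Ico (k+1) K, gf K k l
      = (((K:ℝ)-(k:ℝ)-1) * ((K:ℝ)-(k:ℝ))/2) * ((k:ℝ)/K) := by
    have hc : ∀ l ∈ Ico (k+1) K, gf K k l = ((K:ℝ) - (l:ℝ)) * ((k:ℝ)/K) := by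
      intro l hl
      rw [Finset.mem_Ico] at hl
      have hk' : k ≤ l := by omega
      rw [gf, min_eq_left hk', max_eq_right hk']
      ring
    rw [Finset.sum_congr rfl hc, ← Finset.sum_mul,
      Finset.sum_Ico_eq_sub _ hkK, Finset.sum_sub_distrib, Finset.sum_sub_distrib,
      gauss', gauss', Finset.sum_const, Finset.sum_const]
    simp only [card_range, nsmul_eq_mul]
    push_cast
    ring
  rw [h1, h2, γcoef]
  field_simp
  ring

/-- Extension of a vector on `Fin K` to `ℕ` by zero. -/
noncomputable def extv (K : ℕ) (x : Fin K → ℝ) (n : ℕ) : ℝ :=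
  if h : n < K then x ⟨n, h⟩ else 0

lemma extv_fin (K : ℕ) (x : Fin K → ℝ) (i : Fin K) : extv K x ↑i = x i := by
  simp [extv, i.isLt]

lemma extv_K (K : ℕ) (x : Fin K → ℝ) : extv K x K = 0 := by
  simp [extv]

lemma sumA (c : ℝ) (y : ℕ → ℝ) {n K : ℕ} (h : n < K) :
    ∑ m ∈ range K, (if m = n then c else 0) * y m = c * y n := by
  simp only [ite_mul, zero_mul]
  rw [Finset.sum_ite_eq' (range K) n (fun m => c * y m)]
  simp [h]

lemma sumB (γ : ℝ) (y : ℕ → ℝ) {n K : ℕ} (hγ0 : n = 0 → γ = 0) (h : n < K) :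
    ∑ m ∈ range K, (if m + 1 = n then γ else 0) * y m = γ * y (n - 1) := by
  cases n with
  | zero => simp [hγ0 rfl]
  | succ n' =>
      simp only [Nat.add_left_inj]
      exact sumA γ y (by omega)

lemma sumC (γ : ℝ) (y : ℕ → ℝ) {n K : ℕ} (hy : y K = 0) (h : n < K) :
    ∑ m ∈ range K, (if n + 1 = m then γ else 0) * y m = γ * y (n + 1) := by
  simp only [ite_mul, zero_mul]
  rw [Finset.sum_ite_eq (range K) (n+1) (fun m => γ * y m)]
  by_cases hc : n + 1 < K
  · simp [hc]
  · have hcK : n + 1 = K := by omega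
    simp [hcK, hy]

lemma row (K : ℕ) (x : Fin K → ℝ) (i : Fin K) :
    (Mmat K).mulVec x i
      = γcoef K ↑i * extv K x (↑i - 1)
        - (γcoef K ↑i + γcoef K (↑i + 1)) * extv K x ↑i
        + γcoef K (↑i + 1) * extv K x (↑i + 1) := by
  have h1 : (Mmat K).mulVec x i = ∑ j : Fin K, Mmat K i j * x j := rfl
  have h5 : (Mmat K).mulVec x i = ∑ m ∈ range K,
      ((if m = (i:ℕ) then -(γcoef K ↑i + γcoef K ((i:ℕ)+1)) else 0) * extv K x m
      + ((if m + 1 = (i:ℕ) then γcoef K ↑i else 0) * extv K x m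
      + (if (i:ℕ) + 1 = m then γcoef K ((i:ℕ)+1) else 0) * extv K x m)) := by
    rw [h1]
    refine (Finset.sum_congr rfl fun j _ => ?_).trans (Fin.sum_univ_eq_sum_range _ K)
    rw [extv_fin]
    simp only [Mmat, Matrix.of_apply]
    split_ifs <;> (first | ring1 | (exfalso ; omega))
  rw [h5, Finset.sum_add_distrib, Finset.sum_add_distrib]
  rw [sumA _ _ i.isLt, sumB _ _ (fun h0 => by rw [h0]; exact gamma_zero K) i.isLt,
    sumC _ _ (extv_K K x) i.isLt]
  ring

theorem jacobian_coercivity (K : ℕ) (hK : 2 ≤ K) :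
    (Mmat K).mulVec (fun _ => 1 / Real.sqrt K) = 0 ∧
    ∀ x : Fin K → ℝ, (∑ k, x k) = 0 →
      dotProduct ((Mmat K).mulVec x) x ≤ -(∑ k, x k ^ 2) := by
  have hK0 : (K:ℝ) ≠ 0 := Nat.cast_ne_zero.2 (by omega)
  constructor
  · funext i
    set c : ℝ := 1 / Real.sqrt K with hc
    rw [row K (fun _ => c) i]
    have e1 : extv K (fun _ => c) (↑i - 1) = c := by
      have : (↑i - 1 : ℕ) < K := by have := i.isLt; omega
      simp [extv, this]
    have e2 : extv K (fun _ => c) (↑i : ℕ) = c := by simp [extv, i.isLt]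
    by_cases h3 : (i:ℕ) + 1 < K
    · have e3 : extv K (fun _ => c) ((i:ℕ) + 1) = c := by simp [extv, h3]
      rw [e1, e2, e3]
      simp only [Pi.zero_apply]
      ring
    · have hiK : (i:ℕ) + 1 = K := by have := i.isLt; omega
      have e3 : extv K (fun _ => c) ((i:ℕ) + 1) = 0 := by rw [hiK]; exact extv_K K _
      have hγ : γcoef K ((i:ℕ) + 1) = 0 := by rw [hiK]; exact gamma_K K
      rw [e1, e2, e3, hγ]
      simp only [Pi.zero_apply]
      ring
  · intro x hx
    -- notation
    have hS : ∑ m ∈ range K, extv K x m = 0 := by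
      rw [← Fin.sum_univ_eq_sum_range (extv K x) K,
        Finset.sum_congr rfl (fun k _ => extv_fin K x k)]
      exact hx
    have hsq : ∑ k : Fin K, x k ^ 2 = ∑ m ∈ range K, (extv K x m) ^ 2 := by
      rw [← Fin.sum_univ_eq_sum_range (fun m => (extv K x m)^2) K]
      exact Finset.sum_congr rfl fun k _ => by rw [extv_fin]
    -- Step 1: the quadratic form equals minus the weighted Dirichlet energy
    have hQ : dotProduct ((Mmat K).mulVec x) x
        = ∑ n ∈ range K,
            (γcoef K n * extv K x (n-1) - (γcoef K n + γcoef K (n+1)) * extv K x n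
              + γcoef K (n+1) * extv K x (n+1)) * extv K x n := by
      rw [dotProduct]
      refine (Finset.sum_congr rfl fun i _ => ?_).trans (Fin.sum_univ_eq_sum_range _ K)
      rw [row K x i, ← extv_fin K x i]
    have hsbp := sbp (γcoef K) (extv K x) K
    rw [Finset.sum_add_distrib, gamma_K] at hsbp
    have hQ2 : dotProduct ((Mmat K).mulVec x) x
        = -∑ k ∈ range K, γcoef K k * (extv K x k - extv K x (k-1))^2 := by
      rw [hQ]; linarith [hsbp]
    -- Step 2: summation by parts for the squared norm
    have habel1 := abelsum (extv K x) (fun n => ∑ m ∈ range n, extv K x m) K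
    beta_reduce at habel1
    rw [Finset.sum_range_zero, hS] at habel1
    have habel1' : ∑ k ∈ range K,
        ((extv K x k)^2
          + (∑ m ∈ range k, extv K x m) * (extv K x k - extv K x (k-1))) = 0 := by
      rw [Finset.sum_congr rfl (fun k _ => ?_), habel1]
      · ring
      · rw [Finset.sum_range_succ]
        ring
    rw [Finset.sum_add_distrib] at habel1'
    have hsq_eq : ∑ k ∈ range K, (extv K x k)^2
        = -∑ k ∈ range K,
            (∑ m ∈ range k, extv K x m) * (extv K x k - extv K x (k-1)) := by
      linarith [habel1']
    -- Step 3: Green's function representation of partial sums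
    have hgreen : ∀ k ∈ range K, (∑ m ∈ range k, extv K x m)
        = -∑ l ∈ range K, gf K k l * (extv K x l - extv K x (l-1)) := by
      intro k hkmem
      have hk : k < K := mem_range.1 hkmem
      have h := abelsum (extv K x) (fun l => gf K k l) K
      beta_reduce at h
      rw [gf_rightK (le_of_lt hk), gf_right0] at h
      rw [Finset.sum_add_distrib] at h
      -- compute the first sum
      have hkK : k ≤ K := le_of_lt hk
      have hfst : ∑ l ∈ range K, extv K x l * (gf K k (l+1) - gf K k l)
          = ∑ m ∈ range k, extv K x m := by
        rw [← Finset.sum_range_add_sum_Ico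
          (fun l => extv K x l * (gf K k (l+1) - gf K k l)) hkK]
        have hIco : ∑ l ∈ Ico k K, extv K x l = -∑ m ∈ range k, extv K x m := by
          have h' := Finset.sum_range_add_sum_Ico (extv K x) hkK
          rw [hS] at h'
          linarith
        have h_a : ∑ l ∈ range k, extv K x l * (gf K k (l+1) - gf K k l)
            = (∑ m ∈ range k, extv K x m) * (((K:ℝ) - k)/K) := by
          have hval : ∀ l ∈ range k, extv K x l * (gf K k (l+1) - gf K k l)
              = extv K x l * (((K:ℝ) - k)/K) := by
            intro l hl
            have hl' : l < k := mem_range.1 hl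
            have hlk : l ≤ k := le_of_lt hl'
            have hl1 : l + 1 ≤ k := hl'
            rw [gf, gf, min_eq_right hlk, max_eq_left hlk,
              min_eq_right hl1, max_eq_left hl1]
            push_cast
            ring
          rw [Finset.sum_congr rfl hval, ← Finset.sum_mul]
        have h_b : ∑ l ∈ Ico k K, extv K x l * (gf K k (l+1) - gf K k l)
            = (∑ l ∈ Ico k K, extv K x l) * (-((k:ℝ)/K)) := by
          have hval : ∀ l ∈ Ico k K, extv K x l * (gf K k (l+1) - gf K k l)
              = extv K x l * (-((k:ℝ)/K)) := by
            intro l hl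
            have hkl : k ≤ l := (Finset.mem_Ico.1 hl).1
            have hkl1 : k ≤ l + 1 := by omega
            rw [gf, gf, min_eq_left hkl, max_eq_right hkl,
              min_eq_left hkl1, max_eq_right hkl1]
            push_cast
            ring
          rw [Finset.sum_congr rfl hval, ← Finset.sum_mul]
        rw [h_a, h_b, hIco]
        field_simp
        ring
      rw [hfst] at h
      linarith [h]
    -- Step 4: the squared norm as a Green-form
    have hY2 : ∑ k ∈ range K, (extv K x k)^2
        = ∑ k ∈ range K, ∑ l ∈ range K,
            gf K k l * (extv K x l - extv K x (l-1)) * (extv K x k - extv K x (k-1)) := by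
      rw [hsq_eq, ← Finset.sum_neg_distrib]
      refine Finset.sum_congr rfl fun k hk => ?_
      rw [hgreen k hk, neg_mul, neg_neg, Finset.sum_mul]
    -- Step 5: bound the Green-form by the Dirichlet energy
    have hb1 : ∑ k ∈ range K, ∑ l ∈ range K,
            gf K k l * (extv K x l - extv K x (l-1)) * (extv K x k - extv K x (k-1))
        ≤ ∑ k ∈ range K, ∑ l ∈ range K,
            (gf K k l * ((extv K x l - extv K x (l-1))^2/2)
              + gf K k l * ((extv K x k - extv K x (k-1))^2/2)) := by
      refine Finset.sum_le_sum fun k hk => Finset.sum_le_sum fun l hl => ?_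
      have h0 := gf_nonneg (mem_range.1 hk) (mem_range.1 hl)
      nlinarith [sq_nonneg ((extv K x l - extv K x (l-1)) - (extv K x k - extv K x (k-1))), h0,
        mul_nonneg h0 (sq_nonneg ((extv K x l - extv K x (l-1)) - (extv K x k - extv K x (k-1))))]
    have hT2 : ∑ k ∈ range K, ∑ l ∈ range K,
          gf K k l * ((extv K x k - extv K x (k-1))^2/2)
        = ∑ k ∈ range K, γcoef K k * ((extv K x k - extv K x (k-1))^2/2) := by
      refine Finset.sum_congr rfl fun k hk => ?_
      rw [← Finset.sum_mul, gf_rowsum (mem_range.1 hk)]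
    have hT1 : ∑ k ∈ range K, ∑ l ∈ range K,
          gf K k l * ((extv K x l - extv K x (l-1))^2/2)
        = ∑ l ∈ range K, γcoef K l * ((extv K x l - extv K x (l-1))^2/2) := by
      rw [Finset.sum_comm]
      refine Finset.sum_congr rfl fun l hl => ?_
      rw [← Finset.sum_mul,
        show (∑ k ∈ range K, gf K k l) = γcoef K l from by
          rw [Finset.sum_congr rfl fun k _ => gf_symm K k l]
          exact gf_rowsum (mem_range.1 hl)]
    have hb2 : ∑ k ∈ range K, ∑ l ∈ range K,
            (gf K k l * ((extv K x l - extv K x (l-1))^2/2)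
              + gf K k l * ((extv K x k - extv K x (k-1))^2/2))
        = ∑ k ∈ range K, γcoef K k * (extv K x k - extv K x (k-1))^2 := by
      simp only [Finset.sum_add_distrib]
      rw [hT1, hT2, ← Finset.sum_add_distrib]
      refine Finset.sum_congr rfl fun k _ => ?_
      ring
    -- conclusion
    have hfin : ∑ k ∈ range K, (extv K x k)^2
        ≤ ∑ k ∈ range K, γcoef K k * (extv K x k - extv K x (k-1))^2 := by
      rw [hY2]
      calc _ ≤ _ := hb1
        _ = _ := hb2
    rw [hQ2, hsq]
    linarith
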